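/- arXiv:2505.08210 — 2 statements merged into one kernel-verified Lean document; each statement's English description precedes it below -/
import Mathlib

section
/- Let n ≥ 2, p ≥ 1, and let Y be any real p × n matrix such that every row of YΦ is nonzero (equivalently s_{kk} > 0 for all 1 ≤ k ≤ p). Then for every z ∈ ℂ with Im z > 0, the complex matrices B_n − z I_n and A_n − z I_n are invertible and (1/n) tr (B_n − z I_n)^{−1} = (1/n) tr (A_n − z I_n)^{−1} − (1/n) · √(c_N) / (z (√(c_N) + z)), where c_N = p/(n−1). -/
open MeasureTheory ProbabilityTheory Matrix Filter
open scoped ENNReal NNReal BigOperators Topology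

noncomputable section

/-- The semicircle law on ℝ. -/
def semicircle : Measure ℝ :=
  volume.withDensity fun x =>
    ENNReal.ofReal (Set.indicator (Set.Icc (-2 : ℝ) 2)
      (fun y => Real.sqrt (4 - y ^ 2) / (2 * Real.pi)) x)

/-- The limiting law F^c. -/
def Fc (c : ℝ) : Measure ℝ :=
  (volume.withDensity fun x =>
    ENNReal.ofReal (Set.indicator (Set.Icc ((Real.sqrt c)⁻¹ - 2) ((Real.sqrt c)⁻¹ + 2))
      (fun y => Real.sqrt (4 - y ^ 2 - c⁻¹ + 2 * y * (Real.sqrt c)⁻¹) /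
        (2 * Real.pi * (1 + y * (Real.sqrt c)⁻¹))) x))
  + (if c ≤ 1 then ENNReal.ofReal (1 - c) • Measure.dirac (-(Real.sqrt c)) else 0)

/-- Centering matrix Φ = I - (1/n) 1 1ᵀ. -/
def Phi (n : ℕ) : Matrix (Fin n) (Fin n) ℝ :=
  1 - (n : ℝ)⁻¹ • Matrix.of fun _ _ => (1 : ℝ)

/-- Sample covariance S_n = (1/(n-1)) Y Φ Yᵀ. -/
def sampleCov {p n : ℕ} (Y : Matrix (Fin p) (Fin n) ℝ) : Matrix (Fin p) (Fin p) ℝ :=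
  ((n : ℝ) - 1)⁻¹ • (Y * Phi n * Yᵀ)

/-- D_n = diag(1/s_11, ..., 1/s_pp). -/
def Dmat {p n : ℕ} (Y : Matrix (Fin p) (Fin n) ℝ) : Matrix (Fin p) (Fin p) ℝ :=
  Matrix.diagonal fun k => (sampleCov Y k k)⁻¹

/-- Renormalized sample correlation matrix B_n. -/
def Bmat {p n : ℕ} (Y : Matrix (Fin p) (Fin n) ℝ) : Matrix (Fin n) (Fin n) ℝ :=
  Real.sqrt ((p : ℝ) / ((n : ℝ) - 1)) •
    ((p : ℝ)⁻¹ • (Phi n * Yᵀ * Dmat Y * Y * Phi n) - Phi n)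

/-- Empirical spectral distribution: uniform measure on roots of the char. polynomial. -/
def ESD {n : ℕ} (M : Matrix (Fin n) (Fin n) ℝ) : Measure ℝ :=
  (n : ℝ≥0∞)⁻¹ • (Multiset.map (fun x => Measure.dirac x) M.charpoly.roots).sum

/-- The largest eigenvalue of a (symmetric) matrix. -/
def maxEig {n : ℕ} (M : Matrix (Fin n) (Fin n) ℝ) : ℝ :=
  sSup (spectrum ℝ M)

/-- The data matrix Y = μ 1ᵀ + Σ^{1/2} X built from an array. -/
def Ymat {pn n : ℕ} (μv : Fin pn → ℝ) (σ : Fin pn → ℝ) (xv : Fin pn → Fin n → ℝ) :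
    Matrix (Fin pn) (Fin n) ℝ :=
  Matrix.of fun i j => μv i + Real.sqrt (σ i) * xv i j

/-- Euclidean norm of a vector in `Fin n → ℝ`. -/
def euclNorm {n : ℕ} (v : Fin n → ℝ) : ℝ := Real.sqrt (∑ j, v j ^ 2)

/-- The normalized (centered) rows `r_k = Φ ỹ_k / ‖Φ ỹ_k‖`. -/
def rvec {p n : ℕ} (Y : Matrix (Fin p) (Fin n) ℝ) (k : Fin p) : Fin n → ℝ :=
  (euclNorm ((Phi n).mulVec fun j => Y k j))⁻¹ • (Phi n).mulVec fun j => Y k j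

/-- The matrix `A_n = √(p/N) ((N/p) Σ_k r_k r_kᵀ − I_n)`. -/
def Amat {p n : ℕ} (Y : Matrix (Fin p) (Fin n) ℝ) : Matrix (Fin n) (Fin n) ℝ :=
  Real.sqrt ((p : ℝ) / ((n : ℝ) - 1)) •
    (((((n : ℝ) - 1)) / (p : ℝ)) • ∑ k, Matrix.vecMulVec (rvec Y k) (rvec Y k) - 1)


namespace Statement13Aux

open Matrix Complex

lemma Phi_transpose (n : ℕ) : (Phi n)ᵀ = Phi n := by
  ext i j
  simp [Phi, Matrix.one_apply, eq_comm]

lemma Phi_comm {n : ℕ} (i j : Fin n) : Phi n i j = Phi n j i := by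
  simp [Phi, Matrix.one_apply, eq_comm]

lemma Phi_mul_Phi {n : ℕ} (hn : n ≠ 0) : Phi n * Phi n = Phi n := by
  have hJ : (Matrix.of fun _ _ => (1:ℝ) : Matrix (Fin n) (Fin n) ℝ) *
      Matrix.of (fun _ _ => (1:ℝ)) = (n:ℝ) • Matrix.of fun _ _ => (1:ℝ) := by
    ext i j; simp [Matrix.mul_apply]
  have hn' : (n:ℝ) ≠ 0 := Nat.cast_ne_zero.mpr hn
  unfold Phi
  rw [sub_mul, one_mul, mul_sub, mul_one, Matrix.smul_mul, Matrix.mul_smul, hJ,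
    smul_smul, smul_smul]
  have h : (n:ℝ)⁻¹ * (n:ℝ)⁻¹ * (n:ℝ) = (n:ℝ)⁻¹ := by field_simp
  rw [h]
  simp

lemma Phi_mulVec_one {n : ℕ} (hn : n ≠ 0) :
    (Phi n).mulVec (fun _ => (1:ℝ)) = 0 := by
  have hn' : (n:ℝ) ≠ 0 := Nat.cast_ne_zero.mpr hn
  funext i
  simp [Phi, Matrix.mulVec, dotProduct, Matrix.sub_apply, Matrix.one_apply,
    Finset.sum_sub_distrib, mul_inv_cancel₀ hn']

lemma Phi_colsum {n : ℕ} (hn : n ≠ 0) (a : Fin n) : ∑ j, Phi n j a = 0 := by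
  have h := congrFun (Phi_mulVec_one hn) a
  simp only [Matrix.mulVec, dotProduct, mul_one, Pi.zero_apply] at h
  rw [← h]
  exact Finset.sum_congr rfl fun j _ => Phi_comm j a

lemma YPhi_apply {p n : ℕ} (Y : Matrix (Fin p) (Fin n) ℝ) (k : Fin p) (j : Fin n) :
    (Y * Phi n) k j = (Phi n).mulVec (fun a => Y k a) j := by
  rw [Matrix.mul_apply, Matrix.mulVec, dotProduct]
  exact Finset.sum_congr rfl fun a _ => by rw [Phi_comm a j, mul_comm]

lemma sampleCov_diag {p n : ℕ} (hn : n ≠ 0) (Y : Matrix (Fin p) (Fin n) ℝ) (k : Fin p) :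
    sampleCov Y k k = ((n : ℝ) - 1)⁻¹ * ∑ j, ((Phi n).mulVec (fun a => Y k a) j) ^ 2 := by
  have hfact : Y * Phi n * Yᵀ = (Y * Phi n) * (Y * Phi n)ᵀ := by
    rw [Matrix.transpose_mul, Phi_transpose, ← Matrix.mul_assoc (Y * Phi n),
      Matrix.mul_assoc Y (Phi n) (Phi n), Phi_mul_Phi hn]
  rw [sampleCov, Matrix.smul_apply, hfact, Matrix.mul_apply, smul_eq_mul]
  congr 1
  refine Finset.sum_congr rfl fun j _ => ?_
  rw [Matrix.transpose_apply, YPhi_apply, sq]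

lemma prod_apply {p n : ℕ} (Y : Matrix (Fin p) (Fin n) ℝ) (i j : Fin n) :
    (Phi n * Yᵀ * Dmat Y * Y * Phi n) i j =
      ∑ k, (sampleCov Y k k)⁻¹ * ((Phi n).mulVec (fun a => Y k a) i)
        * ((Phi n).mulVec (fun a => Y k a) j) := by
  have h1 : Phi n * Yᵀ * Dmat Y * Y * Phi n = ((Phi n * Yᵀ) * Dmat Y) * (Y * Phi n) := by
    rw [Matrix.mul_assoc ((Phi n * Yᵀ) * Dmat Y)]
  rw [h1, Matrix.mul_apply]
  refine Finset.sum_congr rfl fun k _ => ?_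
  rw [Dmat, Matrix.mul_diagonal, Matrix.mul_apply]
  have h2 : ∑ a, Phi n i a * Yᵀ a k = (Phi n).mulVec (fun a => Y k a) i := by
    rw [Matrix.mulVec, dotProduct]
    exact Finset.sum_congr rfl fun a _ => rfl
  rw [h2, YPhi_apply]
  ring

lemma key_identity {p n : ℕ} (hn : n ≠ 0) (Y : Matrix (Fin p) (Fin n) ℝ) :
    (p:ℝ)⁻¹ • (Phi n * Yᵀ * Dmat Y * Y * Phi n) =
      (((n:ℝ) - 1) / (p:ℝ)) • ∑ k, Matrix.vecMulVec (rvec Y k) (rvec Y k) := by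
  ext i j
  rw [Matrix.smul_apply, Matrix.smul_apply, prod_apply, Matrix.sum_apply, smul_eq_mul,
    smul_eq_mul, Finset.mul_sum, Finset.mul_sum]
  refine Finset.sum_congr rfl fun k _ => ?_
  set w : Fin n → ℝ := (Phi n).mulVec (fun a => Y k a) with hw
  set t : ℝ := ∑ j, w j ^ 2 with ht
  have ht0 : 0 ≤ t := Finset.sum_nonneg fun _ _ => sq_nonneg _
  have hss : (Real.sqrt t)⁻¹ * (Real.sqrt t)⁻¹ = t⁻¹ := by
    rw [← mul_inv, Real.mul_self_sqrt ht0]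
  have hcov : (sampleCov Y k k)⁻¹ = ((n:ℝ) - 1) * t⁻¹ := by
    rw [sampleCov_diag hn Y k, mul_inv, inv_inv]
  have hrv : ∀ a, rvec Y k a = (Real.sqrt t)⁻¹ * w a := by
    intro a
    rw [rvec, Pi.smul_apply, smul_eq_mul]
    rfl
  rw [Matrix.vecMulVec_apply, hrv, hrv, hcov, ← hss]
  ring

lemma B_eq_A_add {p n : ℕ} (hn : n ≠ 0) (Y : Matrix (Fin p) (Fin n) ℝ) :
    Bmat Y = Amat Y +
      Real.sqrt ((p:ℝ) / ((n:ℝ) - 1)) • ((n:ℝ)⁻¹ • Matrix.of fun _ _ => (1:ℝ)) := by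
  rw [Bmat, Amat, ← smul_add]
  congr 1
  rw [key_identity hn Y]
  unfold Phi
  abel

lemma rvec_sum {p n : ℕ} (hn : n ≠ 0) (Y : Matrix (Fin p) (Fin n) ℝ) (k : Fin p) :
    ∑ j, rvec Y k j = 0 := by
  have hwsum : ∑ j, (Phi n).mulVec (fun a => Y k a) j = 0 := by
    simp only [Matrix.mulVec, dotProduct]
    rw [Finset.sum_comm]
    refine Finset.sum_eq_zero fun a _ => ?_
    rw [← Finset.sum_mul, Phi_colsum hn a, zero_mul]
  simp only [rvec, Pi.smul_apply, smul_eq_mul, ← Finset.mul_sum]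
  rw [hwsum, mul_zero]

lemma Bmat_rowsum {p n : ℕ} (hn : n ≠ 0) (Y : Matrix (Fin p) (Fin n) ℝ) (i : Fin n) :
    ∑ j, Bmat Y i j = 0 := by
  have h : (Bmat Y).mulVec (fun _ => (1:ℝ)) = 0 := by
    rw [Bmat, Matrix.smul_mulVec, Matrix.sub_mulVec, Matrix.smul_mulVec,
      ← Matrix.mulVec_mulVec, ← Matrix.mulVec_mulVec, Phi_mulVec_one hn]
    simp [Matrix.mulVec_zero]
  have := congrFun h i
  simp only [Matrix.mulVec, dotProduct, mul_one, Pi.zero_apply] at this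
  exact this

lemma Amat_rowsum {p n : ℕ} (hn : n ≠ 0) (Y : Matrix (Fin p) (Fin n) ℝ) (i : Fin n) :
    ∑ j, Amat Y i j = -Real.sqrt ((p:ℝ) / ((n:ℝ) - 1)) := by
  have hB := Bmat_rowsum hn Y i
  have hEq := B_eq_A_add hn Y
  have hn' : (n:ℝ) ≠ 0 := Nat.cast_ne_zero.mpr hn
  have h2 : ∀ j, Bmat Y i j = Amat Y i j
      + Real.sqrt ((p:ℝ) / ((n:ℝ) - 1)) * (n:ℝ)⁻¹ := by
    intro j
    rw [hEq]
    simp [Matrix.add_apply, Matrix.smul_apply, smul_eq_mul, mul_comm]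
  rw [Finset.sum_congr rfl (fun j _ => h2 j), Finset.sum_add_distrib,
    Finset.sum_const, Finset.card_univ, Fintype.card_fin, nsmul_eq_mul] at hB
  have h3 : (n:ℝ) * (Real.sqrt ((p:ℝ) / ((n:ℝ) - 1)) * (n:ℝ)⁻¹)
      = Real.sqrt ((p:ℝ) / ((n:ℝ) - 1)) := by
    rw [mul_comm, mul_assoc, inv_mul_cancel₀ hn', mul_one]
  rw [h3] at hB
  linarith

lemma Bmat_symm {p n : ℕ} (Y : Matrix (Fin p) (Fin n) ℝ) : (Bmat Y)ᵀ = Bmat Y := by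
  rw [Bmat, Matrix.transpose_smul, Matrix.transpose_sub, Matrix.transpose_smul]
  congr 2
  · rw [Matrix.transpose_mul, Matrix.transpose_mul, Matrix.transpose_mul,
      Matrix.transpose_mul, Phi_transpose, Matrix.transpose_transpose, Dmat,
      Matrix.diagonal_transpose]
    simp only [Matrix.mul_assoc]
  · exact Phi_transpose n

lemma Amat_symm {p n : ℕ} (Y : Matrix (Fin p) (Fin n) ℝ) : (Amat Y)ᵀ = Amat Y := by
  have hvv : ∀ k : Fin p, (Matrix.vecMulVec (rvec Y k) (rvec Y k))ᵀ
      = Matrix.vecMulVec (rvec Y k) (rvec Y k) := by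
    intro k
    ext i j
    rw [Matrix.transpose_apply, Matrix.vecMulVec_apply, Matrix.vecMulVec_apply, mul_comm]
  rw [Amat, Matrix.transpose_smul, Matrix.transpose_sub, Matrix.transpose_smul,
    Matrix.transpose_one, Matrix.transpose_sum]
  simp only [hvv]

lemma Bmat_colsum {p n : ℕ} (hn : n ≠ 0) (Y : Matrix (Fin p) (Fin n) ℝ) (j : Fin n) :
    ∑ i, Bmat Y i j = 0 := by
  have h := Bmat_rowsum hn Y j
  rw [← h]
  refine Finset.sum_congr rfl fun i _ => ?_
  conv_lhs => rw [← Bmat_symm Y]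
  rw [Matrix.transpose_apply]

lemma Amat_colsum {p n : ℕ} (hn : n ≠ 0) (Y : Matrix (Fin p) (Fin n) ℝ) (j : Fin n) :
    ∑ i, Amat Y i j = -Real.sqrt ((p:ℝ) / ((n:ℝ) - 1)) := by
  have h := Amat_rowsum hn Y j
  rw [← h]
  refine Finset.sum_congr rfl fun i _ => ?_
  conv_lhs => rw [← Amat_symm Y]
  rw [Matrix.transpose_apply]

/-- For a Hermitian complex matrix, `M - z•1` is invertible when `z` is non-real. -/
lemma isUnit_sub_smul_one {n : ℕ} {M : Matrix (Fin n) (Fin n) ℂ} (hM : Mᴴ = M)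
    {z : ℂ} (hz : z.im ≠ 0) : IsUnit (M - z • 1) := by
  rw [Matrix.isUnit_iff_isUnit_det, isUnit_iff_ne_zero]
  intro hdet
  obtain ⟨v, hv, hMv⟩ := Matrix.exists_mulVec_eq_zero_iff.mpr hdet
  have hMv' : M.mulVec v = z • v := by
    have := hMv
    rw [Matrix.sub_mulVec, Matrix.smul_mulVec, Matrix.one_mulVec, sub_eq_zero] at this
    exact this
  set s : ℂ := star v ⬝ᵥ M.mulVec v with hs
  have hsreal : star s = s := by
    calc star s = star (star (star (M *ᵥ v) ⬝ᵥ v)) := by rw [hs, Matrix.star_dotProduct]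
      _ = star (M *ᵥ v) ⬝ᵥ v := star_star _
      _ = (star v ᵥ* Mᴴ) ⬝ᵥ v := by rw [Matrix.star_mulVec]
      _ = star v ⬝ᵥ (M *ᵥ v) := by rw [hM, ← Matrix.dotProduct_mulVec]
      _ = s := hs.symm
  have hnorm : star v ⬝ᵥ v = ((∑ i, Complex.normSq (v i) : ℝ) : ℂ) := by
    rw [dotProduct]
    push_cast
    refine Finset.sum_congr rfl fun i _ => ?_
    rw [Pi.star_apply, Complex.star_def, Complex.normSq_eq_conj_mul_self]
  have hpos : 0 < ∑ i, Complex.normSq (v i) := by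
    obtain ⟨i, hi⟩ := Function.ne_iff.mp hv
    refine Finset.sum_pos' (fun _ _ => Complex.normSq_nonneg _) ⟨i, Finset.mem_univ i, ?_⟩
    exact Complex.normSq_pos.mpr hi
  have hsval : s = z * ((∑ i, Complex.normSq (v i) : ℝ) : ℂ) := by
    rw [hs, hMv', dotProduct_smul, smul_eq_mul, hnorm]
  have him : s.im = z.im * (∑ i, Complex.normSq (v i)) := by
    rw [hsval]
    simp [Complex.mul_im]
  have him0 : s.im = 0 := by
    have := congrArg Complex.im hsreal
    simp only [Complex.star_def, Complex.conj_im] at this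
    linarith
  rw [him0] at him
  exact (mul_ne_zero hz (ne_of_gt hpos)) him.symm

end Statement13Aux

/-- relation between the Stieltjes transforms of `B_n` and `A_n`. -/
theorem trace_resolvent_Bn_eq_An
    (n p : ℕ) (hn : 2 ≤ n) (hp : 1 ≤ p)
    (Y : Matrix (Fin p) (Fin n) ℝ)
    (hY : ∀ k : Fin p, (Y * Phi n) k ≠ 0)
    (z : ℂ) (hz : 0 < z.im) :
    IsUnit ((Bmat Y).map (Complex.ofReal) - z • 1) ∧
    IsUnit ((Amat Y).map (Complex.ofReal) - z • 1) ∧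
    (n : ℂ)⁻¹ * Matrix.trace (((Bmat Y).map (Complex.ofReal) - z • 1)⁻¹) =
      (n : ℂ)⁻¹ * Matrix.trace (((Amat Y).map (Complex.ofReal) - z • 1)⁻¹) -
        (n : ℂ)⁻¹ * ((Real.sqrt ((p : ℝ) / ((n : ℝ) - 1)) : ℂ) /
          (z * ((Real.sqrt ((p : ℝ) / ((n : ℝ) - 1)) : ℂ) + z))) := by
  classical
  open Statement13Aux in
  have hn0 : n ≠ 0 := by omega
  set c : ℝ := Real.sqrt ((p:ℝ) / ((n:ℝ) - 1)) with hc
  set cc : ℂ := (c : ℂ) with hcc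
  set Bc : Matrix (Fin n) (Fin n) ℂ := (Bmat Y).map Complex.ofReal with hBc
  set Ac : Matrix (Fin n) (Fin n) ℂ := (Amat Y).map Complex.ofReal with hAc
  set J : Matrix (Fin n) (Fin n) ℂ := Matrix.of fun _ _ => (1:ℂ) with hJ
  set P : Matrix (Fin n) (Fin n) ℂ := (n:ℂ)⁻¹ • J with hP
  have hz0 : z ≠ 0 := by
    intro h; rw [h] at hz; simp at hz
  have hzim : z.im ≠ 0 := ne_of_gt hz
  have hczs : cc + z ≠ 0 := by
    intro h
    have := congrArg Complex.im h
    simp [hcc, Complex.add_im, Complex.ofReal_im] at this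
    exact hzim this
  have hBJ : Bc * J = 0 := by
    ext i j
    simp only [hBc, hJ, Matrix.mul_apply, Matrix.map_apply, Matrix.of_apply, mul_one,
      Matrix.zero_apply]
    rw [← Complex.ofReal_sum, Bmat_rowsum hn0 Y i, Complex.ofReal_zero]
  have hJA : J * Ac = (-cc) • J := by
    ext i j
    simp only [hAc, hJ, Matrix.mul_apply, Matrix.map_apply, Matrix.of_apply, one_mul,
      Matrix.smul_apply, smul_eq_mul, mul_one]
    rw [← Complex.ofReal_sum, Amat_colsum hn0 Y j]
    push_cast [hcc, hc]
    ring
  have hABc : Bc = Ac + cc • P := by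
    ext i j
    have h := congrFun (congrFun (B_eq_A_add hn0 Y) i) j
    simp only [Matrix.add_apply, Matrix.smul_apply, Matrix.of_apply, smul_eq_mul] at h
    simp only [hBc, hAc, hP, hJ, Matrix.map_apply, Matrix.add_apply, Matrix.smul_apply,
      Matrix.of_apply, smul_eq_mul, mul_one, h]
    push_cast [hcc, hc]
    ring
  have hBH : Bcᴴ = Bc := by
    ext i j
    have h := congrFun (congrFun (Bmat_symm Y) i) j
    rw [Matrix.transpose_apply] at h
    simp only [hBc, Matrix.conjTranspose_apply, Matrix.map_apply, Complex.star_def,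
      Complex.conj_ofReal]
    rw [h]
  have hAH : Acᴴ = Ac := by
    ext i j
    have h := congrFun (congrFun (Amat_symm Y) i) j
    rw [Matrix.transpose_apply] at h
    simp only [hAc, Matrix.conjTranspose_apply, Matrix.map_apply, Complex.star_def,
      Complex.conj_ofReal]
    rw [h]
  have hUB : IsUnit (Bc - z • 1) := isUnit_sub_smul_one hBH hzim
  have hUA : IsUnit (Ac - z • 1) := isUnit_sub_smul_one hAH hzim
  refine ⟨hUB, hUA, ?_⟩
  have detB := (Matrix.isUnit_iff_isUnit_det _).mp hUB
  have detA := (Matrix.isUnit_iff_isUnit_det _).mp hUA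
  have hinvB1 : (Bc - z • 1) * (Bc - z • 1)⁻¹ = 1 := Matrix.mul_nonsing_inv _ detB
  have hinvB2 : (Bc - z • 1)⁻¹ * (Bc - z • 1) = 1 := Matrix.nonsing_inv_mul _ detB
  have hinvA1 : (Ac - z • 1) * (Ac - z • 1)⁻¹ = 1 := Matrix.mul_nonsing_inv _ detA
  have hBP : Bc * P = 0 := by rw [hP, Matrix.mul_smul, hBJ, smul_zero]
  have hPA : P * Ac = (-cc) • P := by
    rw [hP, Matrix.smul_mul, hJA, smul_comm]
  have h3 : (Bc - z • 1)⁻¹ * P = (-z)⁻¹ • P := by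
    have e1 : (Bc - z • 1) * P = (-z) • P := by
      rw [Matrix.sub_mul, hBP, Matrix.smul_mul, Matrix.one_mul, zero_sub, neg_smul]
    have e2 : (Bc - z • 1)⁻¹ * ((Bc - z • 1) * P) = P := by
      rw [← Matrix.mul_assoc, hinvB2, Matrix.one_mul]
    rw [e1, Matrix.mul_smul] at e2
    calc (Bc - z • 1)⁻¹ * P
        = (-z)⁻¹ • (-z • ((Bc - z • 1)⁻¹ * P)) := by
          rw [smul_smul, inv_mul_cancel₀ (neg_ne_zero.mpr hz0), one_smul]
      _ = (-z)⁻¹ • P := by rw [e2]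
  have h4 : P * (Ac - z • 1)⁻¹ = (-cc - z)⁻¹ • P := by
    have hne : (-cc - z) ≠ 0 := by
      intro h
      apply hczs
      have : cc + z = -(-cc - z) := by ring
      rw [this, h, neg_zero]
    have e1 : P * (Ac - z • 1) = (-cc - z) • P := by
      rw [Matrix.mul_sub, hPA, Matrix.mul_smul, Matrix.mul_one, ← sub_smul]
    have e2 : (P * (Ac - z • 1)) * (Ac - z • 1)⁻¹ = P := by
      rw [Matrix.mul_assoc, hinvA1, Matrix.mul_one]
    rw [e1, Matrix.smul_mul] at e2
    calc P * (Ac - z • 1)⁻¹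
        = (-cc - z)⁻¹ • ((-cc - z) • (P * (Ac - z • 1)⁻¹)) := by
          rw [smul_smul, inv_mul_cancel₀ hne, one_smul]
      _ = (-cc - z)⁻¹ • P := by rw [e2]
  have hdiff : (Ac - z • 1) - (Bc - z • 1) = (-cc) • P := by
    rw [hABc, neg_smul]
    abel
  have h5 : (Bc - z • 1)⁻¹ - (Ac - z • 1)⁻¹
      = ((-cc) * ((-z)⁻¹ * (-cc - z)⁻¹)) • P := by
    have key : (Bc - z • 1)⁻¹ - (Ac - z • 1)⁻¹
        = (Bc - z • 1)⁻¹ * ((Ac - z • 1) - (Bc - z • 1)) * (Ac - z • 1)⁻¹ := by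
      rw [Matrix.mul_sub, Matrix.sub_mul, Matrix.mul_assoc ((Bc - z • 1)⁻¹) (Ac - z • 1),
        hinvA1, Matrix.mul_one, hinvB2, Matrix.one_mul]
    rw [key, hdiff, Matrix.mul_smul, Matrix.smul_mul, h3, Matrix.smul_mul, h4,
      smul_smul, smul_smul, mul_assoc]
  have htrP : Matrix.trace P = 1 := by
    rw [hP, Matrix.trace_smul]
    have : Matrix.trace J = (n : ℂ) := by
      simp [hJ, Matrix.trace, Matrix.diag]
    rw [this, smul_eq_mul, inv_mul_cancel₀ (Nat.cast_ne_zero.mpr hn0)]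
  have htrace : Matrix.trace ((Bc - z • 1)⁻¹) - Matrix.trace ((Ac - z • 1)⁻¹)
      = -(cc / (z * (cc + z))) := by
    rw [← Matrix.trace_sub, h5, Matrix.trace_smul, htrP, smul_eq_mul, mul_one]
    have e : -cc - z = -(cc + z) := by ring
    rw [e, inv_neg, inv_neg, div_eq_mul_inv, mul_inv]
    ring
  have harith : (n:ℂ)⁻¹ * Matrix.trace ((Bc - z • 1)⁻¹)
      = (n:ℂ)⁻¹ * Matrix.trace ((Ac - z • 1)⁻¹) - (n:ℂ)⁻¹ * (cc / (z * (cc + z))) := by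
    linear_combination (n:ℂ)⁻¹ * htrace
  exact harith

end
end

section
/- Let s(z) = ∫ (x − z)^{−1} d(semicircle)(x) for z ∈ ℂ with Im z > 0. Then s is complex-differentiable at every point of the upper half-plane, and for all z₁, z₂ with Im z₁ > 0, Im z₂ > 0 and z₁ ≠ z₂, one has s(z₁) ≠ s(z₂), s(z₁)² ≠ 1, s(z₂)² ≠ 1, s(z₁) s(z₂) ≠ 1, and s′(z₁) s′(z₂) / ( s(z₁) − s(z₂) )² − 1 / ( z₁ − z₂ )² = s(z₁)² s(z₂)² / ( ( s(z₁)² − 1 ) ( s(z₂)² − 1 ) ( s(z₁) s(z₂) − 1 )² ). -/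
/-!
Write `s` for the Stieltjes transform of the semicircle law, whose density is
`√(4 - x²) / (2π)` on `[-2, 2]`. Integrating the derivative of `(4 - x²)^{3/2} / (x - z)` over
`[-2, 2]`, where this function vanishes at both ends, gives the linear equation
`(z² - 4) s' = 2 + z s`. Hence `(s² + z s + 1) / (z² - 4)` has zero derivative on the connected
upper half-plane; since `|s(z)| ≤ 1 / Im z` it tends to `0` along `z = i n`, so
`s² + z s + 1 = 0`. Thus `z = -(s + 1/s)`: this makes `s` injective with `s(z₁) s(z₂) ≠ 1`,
gives `s' = s² / (1 - s²)`, and reduces the identity to one between rational functions of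
`s(z₁)` and `s(z₂)`.
-/

open MeasureTheory ProbabilityTheory Matrix Filter
open scoped ENNReal NNReal BigOperators Topology

noncomputable section

/-- Stieltjes transform of the semicircle law, as a function on `ℂ`. -/
def scS : ℂ → ℂ := fun z => ∫ x, ((x : ℂ) - z)⁻¹ ∂semicircle

open Complex Real Set

def stieltjes (μ : Measure ℝ) (z : ℂ) : ℂ := ∫ x, ((x : ℂ) - z)⁻¹ ∂μ

section Stieltjes

variable {z : ℂ}

lemma abs_im_le_norm_ofReal_sub (x : ℝ) (z : ℂ) : |z.im| ≤ ‖(x : ℂ) - z‖ := by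
  simpa using Complex.abs_im_le_norm ((x : ℂ) - z)

lemma ofReal_sub_ne_zero (hz : z.im ≠ 0) (x : ℝ) : (x : ℂ) - z ≠ 0 := by
  intro h
  simpa [h, hz] using abs_im_le_norm_ofReal_sub x z

lemma norm_inv_ofReal_sub_le (hz : 0 < z.im) (x : ℝ) : ‖((x : ℂ) - z)⁻¹‖ ≤ z.im⁻¹ := by
  rw [norm_inv]
  exact inv_anti₀ hz ((le_abs_self _).trans (abs_im_le_norm_ofReal_sub x z))

variable (μ : Measure ℝ) [IsFiniteMeasure μ]

lemma norm_stieltjes_le (hz : 0 < z.im) : ‖stieltjes μ z‖ ≤ z.im⁻¹ * μ.real univ :=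
  norm_integral_le_of_norm_le_const (.of_forall (norm_inv_ofReal_sub_le hz))

lemma hasDerivAt_stieltjes (hz : 0 < z.im) :
    HasDerivAt (stieltjes μ) (∫ x, ((x : ℂ) - z)⁻¹ ^ 2 ∂μ) z := by
  have hball {w : ℂ} (hw : w ∈ Metric.ball z (z.im / 2)) : z.im / 2 < w.im := by
    have := (abs_le.1 (abs_im_le_norm (w - z))).1
    rw [← Complex.dist_eq, sub_im] at this
    linarith [Metric.mem_ball.1 hw]
  have hmeas (w : ℂ) : AEStronglyMeasurable (fun x : ℝ => ((x : ℂ) - w)⁻¹) μ :=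
    (by fun_prop : Measurable _).aestronglyMeasurable
  refine (hasDerivAt_integral_of_dominated_loc_of_deriv_le (F' := fun w x => ((x : ℂ) - w)⁻¹ ^ 2)
    (bound := fun _ => (z.im / 2)⁻¹ ^ 2)
    (Metric.ball_mem_nhds z (half_pos hz)) (.of_forall hmeas)
    ((integrable_const z.im⁻¹).mono' (hmeas z) (.of_forall (norm_inv_ofReal_sub_le hz)))
    ((hmeas z).pow 2) (.of_forall fun x w hw => ?_) (integrable_const _)
    (.of_forall fun x w hw => ?_)).2
  all_goals have hw_im := (half_pos hz).trans (hball hw)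
  · rw [norm_pow]
    gcongr
    exact (norm_inv_ofReal_sub_le hw_im x).trans (inv_anti₀ (half_pos hz) (hball hw).le)
  · exact (((hasDerivAt_id w).const_sub (x : ℂ)).inv (ofReal_sub_ne_zero hw_im.ne' x)).congr_deriv
      (by simp)

end Stieltjes

section Semicircle

instance : IsFiniteMeasure semicircle :=
  isFiniteMeasure_withDensity_ofReal <| Integrable.hasFiniteIntegral <|
    (integrable_indicator_iff measurableSet_Icc).2 <|
      (by fun_prop : Continuous fun y : ℝ => √(4 - y ^ 2) / (2 * π)).integrableOn_Icc

lemma integral_semicircle (f : ℝ → ℂ) :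
    ∫ x, f x ∂semicircle = (2 * π : ℂ)⁻¹ * ∫ x in (-2 : ℝ)..2, (√(4 - x ^ 2) : ℂ) * f x := by
  rw [semicircle, integral_withDensity_eq_integral_toReal_smul
    ((Measurable.indicator (by fun_prop) measurableSet_Icc).ennreal_ofReal)
    (.of_forall fun _ => ENNReal.ofReal_lt_top)]
  have hnonneg (x : ℝ) : 0 ≤ (Icc (-2 : ℝ) 2).indicator (fun y => √(4 - y ^ 2) / (2 * π)) x :=
    indicator_nonneg (fun y _ => by positivity) x
  simp_rw [ENNReal.toReal_ofReal (hnonneg _), ← indicator_smul_apply_left]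
  rw [integral_indicator measurableSet_Icc, integral_Icc_eq_integral_Ioc,
    ← intervalIntegral.integral_of_le (by norm_num), ← intervalIntegral.integral_const_mul]
  refine intervalIntegral.integral_congr fun x _ => ?_
  simp only [Complex.real_smul]
  push_cast
  ring

lemma integral_sqrt_four_sub_sq : ∫ x in (-2 : ℝ)..2, √(4 - x ^ 2) = 2 * π := by
  have h := intervalIntegral.integral_comp_mul_left (fun x => √(4 - x ^ 2)) (two_ne_zero' ℝ)
    (a := -1) (b := 1)
  have hsq (x : ℝ) : √(4 - (2 * x) ^ 2) = 2 * √(1 - x ^ 2) := by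
    rw [show 4 - (2 * x) ^ 2 = 2 ^ 2 * (1 - x ^ 2) by ring, Real.sqrt_mul (by positivity),
      Real.sqrt_sq zero_le_two]
  simp only [hsq, intervalIntegral.integral_const_mul, integral_sqrt_one_sub_sq] at h
  norm_num at h
  linarith

instance : IsProbabilityMeasure semicircle := by
  have h := integral_semicircle 1
  simp only [Pi.one_apply, mul_one, integral_const] at h
  rw [intervalIntegral.integral_ofReal, integral_sqrt_four_sub_sq] at h
  have hπ : (π : ℂ) ≠ 0 := ofReal_ne_zero.2 pi_ne_zero
  rw [real_smul, mul_one, show (2 * π : ℂ)⁻¹ * ((2 * π : ℝ) : ℂ) = 1 by push_cast; field_simp] at h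
  refine ⟨(ENNReal.toReal_eq_one_iff _).1 (ofReal_eq_one.1 h)⟩

end Semicircle

section IntegrationByParts

lemma hasDerivAt_four_sub_sq_mul_sqrt {x : ℝ} (hx : x ∈ Ioo (-2 : ℝ) 2) :
    HasDerivAt (fun y => (4 - y ^ 2) * √(4 - y ^ 2)) (-3 * x * √(4 - x ^ 2)) x := by
  have hpos : 0 < 4 - x ^ 2 := by nlinarith [hx.1, hx.2]
  have hq : HasDerivAt (fun y : ℝ => 4 - y ^ 2) (-(2 * x)) x := by
    simpa using (hasDerivAt_pow 2 x).const_sub 4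
  refine (hq.mul (hq.sqrt hpos.ne')).congr_deriv ?_
  field_simp
  rw [Real.sq_sqrt hpos.le]
  ring

variable {z : ℂ}

lemma sq_sub_four_mul_integral_sqrt_div_sub_sq (hz : z.im ≠ 0) :
    (z ^ 2 - 4) * ∫ x in (-2 : ℝ)..2, (√(4 - x ^ 2) : ℂ) * ((x : ℂ) - z)⁻¹ ^ 2 =
      2 * (∫ x in (-2 : ℝ)..2, (√(4 - x ^ 2) : ℂ)) +
        z * ∫ x in (-2 : ℝ)..2, (√(4 - x ^ 2) : ℂ) * ((x : ℂ) - z)⁻¹ := by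
  have hinv : Continuous fun x : ℝ => ((x : ℂ) - z)⁻¹ :=
    (continuous_ofReal.sub continuous_const).inv₀ (ofReal_sub_ne_zero hz)
  have hF (x : ℝ) (hx : x ∈ Ioo (-2 : ℝ) 2) :
      HasDerivAt (fun y : ℝ => (((4 - y ^ 2) * √(4 - y ^ 2) : ℝ) : ℂ) / ((y : ℂ) - z))
        ((z ^ 2 - 4) * ((√(4 - x ^ 2) : ℂ) * ((x : ℂ) - z)⁻¹ ^ 2) -
          (2 * (√(4 - x ^ 2) : ℂ) + z * ((√(4 - x ^ 2) : ℂ) * ((x : ℂ) - z)⁻¹))) x := by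
    have hxz := ofReal_sub_ne_zero hz x
    refine ((hasDerivAt_four_sub_sq_mul_sqrt hx).ofReal_comp.div
      ((hasDerivAt_id' x).ofReal_comp.sub_const z) hxz).congr_deriv ?_
    field_simp
    push_cast
    ring
  have hFTC := intervalIntegral.integral_eq_sub_of_hasDerivAt_of_le (by norm_num)
    ((Continuous.div (by fun_prop) (by fun_prop) (ofReal_sub_ne_zero hz)).continuousOn) hF
    (Continuous.intervalIntegrable (by fun_prop) _ _)
  have h_four_sub : ∀ a : ℝ, a ^ 2 = 4 → 4 - a ^ 2 = 0 := fun a ha => by rw [ha, sub_self]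
  simp only [Pi.div_apply, h_four_sub 2 (by norm_num), h_four_sub (-2) (by norm_num), zero_mul,
    ofReal_zero, zero_div, sub_zero] at hFTC
  have hint : ∀ g : ℝ → ℂ, Continuous g → IntervalIntegrable g volume (-2) 2 :=
    fun g hg => hg.intervalIntegrable _ _
  rw [intervalIntegral.integral_sub (hint _ (by fun_prop)) (hint _ (by fun_prop)),
    intervalIntegral.integral_const_mul, intervalIntegral.integral_add (hint _ (by fun_prop))
    (hint _ (by fun_prop)), intervalIntegral.integral_const_mul,
    intervalIntegral.integral_const_mul] at hFTC
  linear_combination hFTC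

end IntegrationByParts

section FunctionalEquation

variable {z : ℂ}

lemma sq_sub_four_ne_zero (hz : z.im ≠ 0) : z ^ 2 - 4 ≠ 0 := by
  intro h
  have : (z - 2) * (z + 2) = 0 := by linear_combination h
  rcases mul_eq_zero.1 this with h | h <;> exact hz (by simpa using congrArg im h)

lemma scS_eq_stieltjes : scS = stieltjes semicircle := rfl

lemma sq_sub_four_mul_integral_semicircle (hz : z.im ≠ 0) :
    (z ^ 2 - 4) * ∫ x, ((x : ℂ) - z)⁻¹ ^ 2 ∂semicircle = 2 + z * scS z := by
  have hπ : (π : ℂ) ≠ 0 := ofReal_ne_zero.2 pi_ne_zero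
  have hmass : ∫ x in (-2 : ℝ)..2, (√(4 - x ^ 2) : ℂ) = 2 * π := by
    rw [intervalIntegral.integral_ofReal, integral_sqrt_four_sub_sq]
    push_cast
    rfl
  rw [scS_eq_stieltjes, stieltjes, integral_semicircle, integral_semicircle, mul_left_comm,
    sq_sub_four_mul_integral_sqrt_div_sub_sq hz, hmass]
  field_simp

lemma hasDerivAt_scS (hz : 0 < z.im) : HasDerivAt scS ((2 + z * scS z) / (z ^ 2 - 4)) z := by
  rw [← sq_sub_four_mul_integral_semicircle hz.ne',
    mul_div_cancel_left₀ _ (sq_sub_four_ne_zero hz.ne')]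
  exact hasDerivAt_stieltjes semicircle hz

lemma hasDerivAt_sq_add_mul_add_one_div_eq_zero {f : ℂ → ℂ} (hz : z ^ 2 - 4 ≠ 0)
    (hf : HasDerivAt f ((2 + z * f z) / (z ^ 2 - 4)) z) :
    HasDerivAt (fun w => (f w ^ 2 + w * f w + 1) / (w ^ 2 - 4)) 0 z := by
  refine ((((hf.pow 2).add ((hasDerivAt_id' z).mul hf)).add_const 1).div
    ((hasDerivAt_pow 2 z).sub_const 4) hz).congr_deriv ?_
  simp only [Pi.add_apply, Pi.pow_apply, Pi.mul_apply]
  field_simp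
  ring

lemma norm_scS_I_mul_le {y : ℝ} (hy : 0 < y) : ‖scS (I * y)‖ ≤ y⁻¹ := by
  simpa [scS_eq_stieltjes] using norm_stieltjes_le semicircle (z := I * y) (by simpa using hy)

lemma norm_sq_add_mul_add_one_div_le {y : ℝ} (hy : 1 ≤ y) :
    ‖(scS (I * y) ^ 2 + I * y * scS (I * y) + 1) / ((I * y) ^ 2 - 4)‖ ≤ 3 / y := by
  have hy0 : 0 < y := one_pos.trans_le hy
  have hs := norm_scS_I_mul_le hy0
  have hs1 : ‖scS (I * y)‖ ≤ 1 := hs.trans (inv_le_one_of_one_le₀ hy)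
  have hden : ‖(I * y) ^ 2 - 4‖ = y ^ 2 + 4 := by
    rw [mul_pow, I_sq, show -1 * (y : ℂ) ^ 2 - 4 = ((-(y ^ 2 + 4) : ℝ) : ℂ) by push_cast; ring,
      norm_real, Real.norm_eq_abs, abs_neg, abs_of_pos (by positivity)]
  have hnum : ‖scS (I * y) ^ 2 + I * y * scS (I * y) + 1‖ ≤ 3 := by
    have hIy : ‖I * y * scS (I * y)‖ ≤ 1 := by
      rw [norm_mul, norm_mul, norm_I, one_mul, norm_real, Real.norm_of_nonneg hy0.le]
      exact (mul_le_mul_of_nonneg_left hs hy0.le).trans_eq (mul_inv_cancel₀ hy0.ne')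
    calc _ ≤ ‖scS (I * y)‖ ^ 2 + ‖I * y * scS (I * y)‖ + ‖(1 : ℂ)‖ := by
          rw [← norm_pow]; exact norm_add₃_le
      _ ≤ 1 ^ 2 + 1 + ‖(1 : ℂ)‖ := by gcongr
      _ = 3 := by norm_num
  rw [norm_div, hden]
  exact div_le_div₀ (by norm_num) hnum hy0 (by nlinarith)

theorem scS_sq_add_mul_add_one (hz : 0 < z.im) : scS z ^ 2 + z * scS z + 1 = 0 := by
  set H : ℂ → ℂ := fun w => (scS w ^ 2 + w * scS w + 1) / (w ^ 2 - 4)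
  have hH {w : ℂ} (hw : 0 < w.im) : HasDerivAt H 0 w :=
    hasDerivAt_sq_add_mul_add_one_div_eq_zero (sq_sub_four_ne_zero hw.ne') (hasDerivAt_scS hw)
  have hconst {w : ℂ} (hw : 0 < w.im) : H z = H w :=
    (isOpen_lt continuous_const continuous_im).is_const_of_deriv_eq_zero
      (convex_halfSpace_im_gt 0).isPreconnected
      (fun w hw => (hH hw).differentiableAt.differentiableWithinAt) (fun w hw => (hH hw).deriv)
      hz hw
  have hbound : ∀ᶠ n : ℕ in atTop, ‖H z‖ ≤ 3 / n := by
    filter_upwards [eventually_ge_atTop 1] with n hn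
    have hn' : (1 : ℝ) ≤ n := by exact_mod_cast hn
    rw [hconst (w := I * n) (by simpa using one_pos.trans_le hn')]
    exact norm_sq_add_mul_add_one_div_le hn'
  have hH0 : H z = 0 :=
    norm_le_zero_iff.1 (ge_of_tendsto (tendsto_const_div_atTop_nhds_zero_nat 3) hbound)
  exact (div_eq_zero_iff.1 hH0).resolve_right (sq_sub_four_ne_zero hz.ne')

end FunctionalEquation

section Inversion

def scSInv (s : ℂ) : ℂ := -(s + s⁻¹)

lemma scSInv_sub_scSInv {s₁ s₂ : ℂ} (h₁ : s₁ ≠ 0) (h₂ : s₂ ≠ 0) :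
    scSInv s₁ - scSInv s₂ = (s₁ - s₂) * (1 - s₁ * s₂) / (s₁ * s₂) := by
  unfold scSInv
  field_simp
  ring

lemma ne_and_mul_ne_one_of_scSInv_ne {s₁ s₂ : ℂ} (h : scSInv s₁ ≠ scSInv s₂) :
    s₁ ≠ s₂ ∧ s₁ * s₂ ≠ 1 := by
  refine ⟨fun hs => h (hs ▸ rfl), fun hmul => h ?_⟩
  rw [eq_inv_of_mul_eq_one_right hmul, scSInv, scSInv, inv_inv, add_comm]

variable {z : ℂ}

lemma scS_ne_zero (hz : 0 < z.im) : scS z ≠ 0 := by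
  intro h
  simpa [h] using scS_sq_add_mul_add_one hz

lemma scSInv_scS (hz : 0 < z.im) : scSInv (scS z) = z := by
  have h := scS_sq_add_mul_add_one hz
  have h0 := scS_ne_zero hz
  unfold scSInv
  field_simp
  linear_combination -h

lemma scS_sq_ne_one (hz : 0 < z.im) : scS z ^ 2 ≠ 1 := by
  intro h
  have h' : (scS z - 1) * (scS z + 1) = 0 := by linear_combination h
  rw [← scSInv_scS hz] at hz
  rcases mul_eq_zero.1 h' with h' | h'
  · rw [sub_eq_zero.1 h'] at hz
    norm_num [scSInv] at hz
  · rw [eq_neg_of_add_eq_zero_left h'] at hz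
    norm_num [scSInv] at hz

lemma deriv_scS (hz : 0 < z.im) : deriv scS z = scS z ^ 2 / (1 - scS z ^ 2) := by
  have h0 := scS_ne_zero hz
  have h1 := scS_sq_ne_one hz
  have hzs := scSInv_scS hz
  rw [(hasDerivAt_scS hz).deriv]
  set s := scS z
  have hden : (-(s + s⁻¹)) ^ 2 - 4 = ((1 - s ^ 2) / s) ^ 2 := by
    field_simp
    ring
  rw [← hzs, scSInv, hden]
  field_simp
  ring

lemma div_one_sub_sq_mul_div_sub_one_div_scSInv_sub_sq {s₁ s₂ : ℂ} (h₁ : s₁ ≠ 0) (h₂ : s₂ ≠ 0)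
    (hsq₁ : s₁ ^ 2 ≠ 1) (hsq₂ : s₂ ^ 2 ≠ 1) (hne : s₁ ≠ s₂) (hmul : s₁ * s₂ ≠ 1) :
    s₁ ^ 2 / (1 - s₁ ^ 2) * (s₂ ^ 2 / (1 - s₂ ^ 2)) / (s₁ - s₂) ^ 2 -
        1 / (scSInv s₁ - scSInv s₂) ^ 2 =
      s₁ ^ 2 * s₂ ^ 2 / ((s₁ ^ 2 - 1) * (s₂ ^ 2 - 1) * (s₁ * s₂ - 1) ^ 2) := by
  rw [scSInv_sub_scSInv h₁ h₂]
  field_simp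
  ring

end Inversion

/-- analyticity and algebraic identities for the Stieltjes transform
of the semicircle law on the upper half plane. -/
theorem scS_differentiable_and_identity :
    (∀ z : ℂ, 0 < z.im → DifferentiableAt ℂ scS z) ∧
    ∀ z₁ z₂ : ℂ, 0 < z₁.im → 0 < z₂.im → z₁ ≠ z₂ →
      scS z₁ ≠ scS z₂ ∧ scS z₁ ^ 2 ≠ 1 ∧ scS z₂ ^ 2 ≠ 1 ∧ scS z₁ * scS z₂ ≠ 1 ∧
        deriv scS z₁ * deriv scS z₂ / (scS z₁ - scS z₂) ^ 2 - 1 / (z₁ - z₂) ^ 2 =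
          scS z₁ ^ 2 * scS z₂ ^ 2 /
            ((scS z₁ ^ 2 - 1) * (scS z₂ ^ 2 - 1) * (scS z₁ * scS z₂ - 1) ^ 2) := by
  refine ⟨fun z hz => (hasDerivAt_scS hz).differentiableAt, fun z₁ z₂ h₁ h₂ hne => ?_⟩
  obtain ⟨hs, hmul⟩ := ne_and_mul_ne_one_of_scSInv_ne (s₁ := scS z₁) (s₂ := scS z₂)
    (by rwa [scSInv_scS h₁, scSInv_scS h₂])
  have hidentity := div_one_sub_sq_mul_div_sub_one_div_scSInv_sub_sq (scS_ne_zero h₁)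
    (scS_ne_zero h₂) (scS_sq_ne_one h₁) (scS_sq_ne_one h₂) hs hmul
  rw [scSInv_scS h₁, scSInv_scS h₂, ← deriv_scS h₁, ← deriv_scS h₂] at hidentity
  exact ⟨hs, scS_sq_ne_one h₁, scS_sq_ne_one h₂, hmul, hidentity⟩

end
end
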